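/- arXiv:2212.11253 — 2 statements merged into one kernel-verified Lean document; each statement's English description precedes it below -/
import Mathlib

section
/- For any real numbers x ≠ 0 and y, |x - y| - |x| = -y·sign(x) + 2·∫₀^y (𝟙(x ≤ s) - 𝟙(x ≤ 0)) ds (Knight's identity). -/
lemma knight_ind_mono (x : ℝ) : Monotone (fun s : ℝ => if x ≤ s then (1:ℝ) else 0) := by
  intro u v huv
  dsimp only
  split_ifs with h1 h2
  · exact le_refl _
  · exact absurd (h1.trans huv) h2
  · norm_num
  · exact le_refl _

lemma knight_ind_integral (x a b : ℝ) :
    ∫ s in a..b, (if x ≤ s then (1:ℝ) else 0) = max b x - max a x := by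
  have key : ∀ a b : ℝ, a ≤ b →
      ∫ s in a..b, (if x ≤ s then (1:ℝ) else 0) = max b x - max a x := by
    intro a b hab
    have hcont : ContinuousOn (fun s : ℝ => max s x) (Set.Icc a b) :=
      (continuous_id.max continuous_const).continuousOn
    have hderiv : ∀ s ∈ Set.Ioo a b,
        HasDerivWithinAt (fun t : ℝ => max t x) (if x ≤ s then (1:ℝ) else 0) (Set.Ioi s) s := by
      intro s _
      by_cases h : x ≤ s
      · rw [if_pos h]
        refine (hasDerivWithinAt_id s (Set.Ioi s)).congr ?_ ?_
        · intro t ht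
          exact max_eq_left (h.trans (le_of_lt ht))
        · exact max_eq_left h
      · rw [if_neg h]
        push_neg at h
        refine (hasDerivWithinAt_const s (Set.Ioi s) x).congr_of_eventuallyEq ?_ ?_
        · have : Set.Iio x ∈ nhdsWithin s (Set.Ioi s) :=
            nhdsWithin_le_nhds (Iio_mem_nhds h)
          filter_upwards [this] with t ht
          exact max_eq_right (le_of_lt ht)
        · exact max_eq_right (le_of_lt h)
    exact intervalIntegral.integral_eq_sub_of_hasDeriv_right_of_le hab hcont hderiv
      ((knight_ind_mono x).intervalIntegrable)
  rcases le_total a b with h | h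
  · exact key a b h
  · rw [intervalIntegral.integral_symm, key b a h]; ring

/-- Knight's identity: for any real `x ≠ 0` and `y`,
`|x - y| - |x| = -y * sign x + 2 * ∫₀^y (𝟙(x ≤ s) - 𝟙(x ≤ 0)) ds`. -/
theorem knight_identity (x y : ℝ) (hx : x ≠ 0) :
    |x - y| - |x| =
      -y * Real.sign x +
        2 * ∫ s in (0:ℝ)..y,
          ((if x ≤ s then (1:ℝ) else 0) - (if x ≤ 0 then (1:ℝ) else 0)) := by
  have hI : ∫ s in (0:ℝ)..y,
      ((if x ≤ s then (1:ℝ) else 0) - (if x ≤ 0 then (1:ℝ) else 0))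
      = (max y x - max 0 x) - y * (if x ≤ 0 then (1:ℝ) else 0) := by
    rw [intervalIntegral.integral_sub ((knight_ind_mono x).intervalIntegrable)
      (intervalIntegrable_const), knight_ind_integral, intervalIntegral.integral_const]
    simp [smul_eq_mul]
  rw [hI]
  rcases hx.lt_or_gt with hneg | hpos
  · rw [Real.sign_of_neg hneg, if_pos hneg.le, max_eq_left hneg.le, abs_of_neg hneg]
    rcases le_total y x with h | h
    · rw [max_eq_right h, abs_of_nonneg (by linarith : (0:ℝ) ≤ x - y)]
      ring
    · rw [max_eq_left h, abs_of_nonpos (by linarith : x - y ≤ 0)]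
      ring
  · rw [Real.sign_of_pos hpos, if_neg (not_le.mpr hpos), max_eq_right hpos.le, abs_of_pos hpos]
    rcases le_total y x with h | h
    · rw [max_eq_right h, abs_of_nonneg (by linarith : (0:ℝ) ≤ x - y)]
      ring
    · rw [max_eq_left h, abs_of_nonpos (by linarith : x - y ≤ 0)]
      ring
end

section
/- Let β₁: [0,1] → ℝ be Lipschitz with constant L and sup_u |β₁(u)| ≤ ρ < 1. Define ψ_{l,t,T} := ∏_{k=0}^{l−1} β₁((t−k)/T) (with β₁ extended constantly below 0) and ψ_l(u) := β₁(u)^l. Then there exists a constant C (depending only on L and ρ) such that |ψ_{l,t,T} − ψ_l(t/T)| ≤ C l² ρ^{l−1} /T for all l ≥ 1, t ∈ {1,...,T}. -/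
/-- With `β₁` Lipschitz (constant `Lc`) and `|β₁| ≤ ρ < 1` on `[0,1]` (extended constantly
below `0`), `|ψ_{l,t,T} - β₁(t/T)^l| ≤ C l² ρ^{l-1}/T` for a constant `C` depending only on
`Lc` and `ρ`. -/
theorem tvAR1_coeff_approx (β : ℝ → ℝ) (ρ Lc : ℝ) (hρ0 : 0 ≤ ρ) (hρ : ρ < 1)
    (hext : ∀ u < (0:ℝ), β u = β 0)
    (hbd : ∀ u ∈ Set.Icc (0:ℝ) 1, |β u| ≤ ρ)
    (hlip : ∀ u ∈ Set.Icc (0:ℝ) 1, ∀ v ∈ Set.Icc (0:ℝ) 1,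
      |β u - β v| ≤ Lc * |u - v|) :
    ∃ C : ℝ, 0 < C ∧ ∀ T t l : ℕ, 0 < T → 1 ≤ t → t ≤ T → 1 ≤ l →
      |(∏ k ∈ Finset.range l, β (((t : ℝ) - k) / T)) - (β ((t : ℝ) / T)) ^ l|
        ≤ C * l ^ 2 * ρ ^ (l - 1) / T := by
  set D := max Lc 0 with hDdef
  have hD0 : 0 ≤ D := le_max_right _ _
  have hLcD : Lc ≤ D := le_max_left _ _
  refine ⟨D + 1, by positivity, ?_⟩
  intro T t l hT ht1 htT hl1
  have hTpos : (0:ℝ) < T := by exact_mod_cast hT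
  have htT' : (t:ℝ) ≤ T := by exact_mod_cast htT
  have ht0 : (0:ℝ) ≤ t := by positivity
  have hmem : ((t:ℝ)/T) ∈ Set.Icc (0:ℝ) 1 := by
    constructor
    · positivity
    · rw [div_le_one hTpos]; exact htT'
  have hb : ∀ k : ℕ, |β (((t:ℝ) - k)/T)| ≤ ρ := by
    intro k
    rcases le_or_gt (k:ℝ) (t:ℝ) with h | h
    · apply hbd
      constructor
      · apply div_nonneg (by linarith) hTpos.le
      · rw [div_le_one hTpos]
        have : (0:ℝ) ≤ (k:ℝ) := by positivity
        linarith
    · rw [hext _ (by apply div_neg_of_neg_of_pos (by linarith) hTpos)]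
      exact hbd 0 ⟨le_refl _, by norm_num⟩
  have hdiff : ∀ k : ℕ, |β (((t:ℝ) - k)/T) - β ((t:ℝ)/T)| ≤ D * k / T := by
    intro k
    have hk0 : (0:ℝ) ≤ (k:ℝ) := by positivity
    rcases le_or_gt (k:ℝ) (t:ℝ) with h | h
    · have hmem' : (((t:ℝ) - k)/T) ∈ Set.Icc (0:ℝ) 1 := by
        constructor
        · apply div_nonneg (by linarith) hTpos.le
        · rw [div_le_one hTpos]; linarith
      have := hlip _ hmem' _ hmem
      have habs : |((t:ℝ) - k)/T - (t:ℝ)/T| = k / T := by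
        rw [div_sub_div_same]
        rw [abs_div, abs_of_pos hTpos]
        congr 1
        rw [show (t:ℝ) - k - t = -(k:ℝ) by ring, abs_neg, abs_of_nonneg hk0]
      rw [habs] at this
      calc |β (((t:ℝ) - k)/T) - β ((t:ℝ)/T)| ≤ Lc * (k / T) := this
        _ ≤ D * (k / T) := by
            apply mul_le_mul_of_nonneg_right hLcD (by positivity)
        _ = D * k / T := by ring
    · rw [hext _ (by apply div_neg_of_neg_of_pos (by linarith) hTpos)]
      have := hlip 0 ⟨le_refl _, by norm_num⟩ _ hmem
      have habs : |(0:ℝ) - (t:ℝ)/T| = t / T := by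
        rw [zero_sub, abs_neg, abs_of_nonneg (by positivity)]
      rw [habs] at this
      calc |β 0 - β ((t:ℝ)/T)| ≤ Lc * ((t:ℝ) / T) := this
        _ ≤ D * ((t:ℝ) / T) := by
            apply mul_le_mul_of_nonneg_right hLcD (by positivity)
        _ ≤ D * ((k:ℝ) / T) := by
            apply mul_le_mul_of_nonneg_left _ hD0
            apply div_le_div_of_nonneg_right (le_of_lt h) hTpos.le
        _ = D * k / T := by ring
  have hbρ : |β ((t:ℝ)/T)| ≤ ρ := hbd _ hmem
  have key : ∀ n : ℕ, |(∏ k ∈ Finset.range n, β (((t:ℝ) - k) / T)) - (β ((t:ℝ)/T)) ^ n|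
      ≤ ρ ^ (n - 1) * (D / T) * (∑ k ∈ Finset.range n, (k:ℝ)) := by
    intro n
    induction n with
    | zero => simp
    | succ n ih =>
      rw [Finset.prod_range_succ, Finset.sum_range_succ, pow_succ]
      have step : |(∏ k ∈ Finset.range n, β (((t:ℝ) - k) / T)) * β (((t:ℝ) - n) / T)
          - (β ((t:ℝ)/T)) ^ n * β ((t:ℝ)/T)|
          ≤ |(∏ k ∈ Finset.range n, β (((t:ℝ) - k) / T)) - (β ((t:ℝ)/T)) ^ n|
              * |β (((t:ℝ) - n) / T)|
            + |β ((t:ℝ)/T)| ^ n * |β (((t:ℝ) - n) / T) - β ((t:ℝ)/T)| := by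
        have : (∏ k ∈ Finset.range n, β (((t:ℝ) - k) / T)) * β (((t:ℝ) - n) / T)
            - (β ((t:ℝ)/T)) ^ n * β ((t:ℝ)/T)
            = ((∏ k ∈ Finset.range n, β (((t:ℝ) - k) / T)) - (β ((t:ℝ)/T)) ^ n)
                * β (((t:ℝ) - n) / T)
              + (β ((t:ℝ)/T)) ^ n * (β (((t:ℝ) - n) / T) - β ((t:ℝ)/T)) := by ring
        rw [this]
        calc _ ≤ |((∏ k ∈ Finset.range n, β (((t:ℝ) - k) / T)) - (β ((t:ℝ)/T)) ^ n)
                * β (((t:ℝ) - n) / T)|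
              + |(β ((t:ℝ)/T)) ^ n * (β (((t:ℝ) - n) / T) - β ((t:ℝ)/T))| := abs_add_le _ _
          _ = _ := by rw [abs_mul, abs_mul, abs_pow]
      have hsumnn : 0 ≤ ∑ k ∈ Finset.range n, (k:ℝ) :=
        Finset.sum_nonneg fun k _ => by positivity
      have h1 : |(∏ k ∈ Finset.range n, β (((t:ℝ) - k) / T)) - (β ((t:ℝ)/T)) ^ n|
          * |β (((t:ℝ) - n) / T)| ≤ ρ ^ (n - 1) * (D / T) * (∑ k ∈ Finset.range n, (k:ℝ)) * ρ := by
        apply mul_le_mul ih (hb n) (abs_nonneg _)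
        positivity
      have h2 : |β ((t:ℝ)/T)| ^ n * |β (((t:ℝ) - n) / T) - β ((t:ℝ)/T)|
          ≤ ρ ^ n * (D * n / T) := by
        apply mul_le_mul (pow_le_pow_left₀ (abs_nonneg _) hbρ n) (hdiff n) (abs_nonneg _)
        positivity
      have hfin : ρ ^ (n - 1) * (D / T) * (∑ k ∈ Finset.range n, (k:ℝ)) * ρ
          + ρ ^ n * (D * n / T)
          ≤ ρ ^ (n + 1 - 1) * (D / T) * ((∑ k ∈ Finset.range n, (k:ℝ)) + n) := by
        rcases n with _ | m
        · simp
        · have h3 : ρ ^ (m + 1 - 1) * (D / ↑T) * (∑ k ∈ Finset.range (m+1), (k:ℝ)) * ρ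
              = ρ ^ (m + 1) * (D / ↑T) * (∑ k ∈ Finset.range (m+1), (k:ℝ)) := by
            rw [Nat.add_sub_cancel]; ring
          rw [show (m:ℕ) + 1 + 1 - 1 = m + 1 from rfl, h3]
          apply le_of_eq
          push_cast
          ring
      calc _ ≤ _ := step
        _ ≤ _ := by linarith
  refine (key l).trans ?_
  have hsum : (∑ k ∈ Finset.range l, (k:ℝ)) ≤ (l:ℝ) ^ 2 := by
    calc (∑ k ∈ Finset.range l, (k:ℝ)) ≤ ∑ k ∈ Finset.range l, (l:ℝ) := by
          apply Finset.sum_le_sum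
          intro k hk
          exact_mod_cast (Finset.mem_range.mp hk).le
      _ = (l:ℝ) * l := by rw [Finset.sum_const, Finset.card_range]; ring
      _ = (l:ℝ) ^ 2 := by ring
  have hsumnn : 0 ≤ ∑ k ∈ Finset.range l, (k:ℝ) :=
    Finset.sum_nonneg fun k _ => by positivity
  have hpnn : (0:ℝ) ≤ ρ ^ (l - 1) := pow_nonneg hρ0 _
  rw [show ρ ^ (l - 1) * (D / T) * (∑ k ∈ Finset.range l, (k:ℝ))
      = ρ ^ (l - 1) * D * (∑ k ∈ Finset.range l, (k:ℝ)) / T by ring,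
    div_le_div_iff₀ hTpos hTpos]
  have hl2 : (0:ℝ) ≤ (l:ℝ)^2 := by positivity
  nlinarith [mul_le_mul_of_nonneg_left hsum (mul_nonneg hpnn hD0),
    mul_nonneg (mul_nonneg hpnn hl2) hTpos.le]
end
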